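/- arXiv:1908.04938 — 4 statements merged into one kernel-verified Lean document; each statement's English description precedes it below -/
import Mathlib

section
/- If a and b are coprime integers with a even and a ≡ 0 (mod 3), then gcd((a+b)³(b−3a), (3a+b)(b−a)³) = 1. -/
theorem stmt_5 (a b : ℤ) (h : IsCoprime a b) (ha : Even a) (h3 : a ≡ 0 [ZMOD 3]) :
    IsCoprime ((a+b)^3*(b-3*a)) ((3*a+b)*(b-a)^3) := by
  have h2a : (2:ℤ) ∣ a := ha.two_dvd
  have h3a : (3:ℤ) ∣ a := by
    exact Int.modEq_zero_iff_dvd.mp h3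
  have h2b : ¬ (2:ℤ) ∣ b := by
    intro hb
    have := h.isUnit_of_dvd' h2a hb
    rw [Int.isUnit_iff] at this
    omega
  have h3b : ¬ (3:ℤ) ∣ b := by
    intro hb
    have := h.isUnit_of_dvd' h3a hb
    rw [Int.isUnit_iff] at this
    omega
  have p2 : Prime (2:ℤ) := Int.prime_two
  have p3 : Prime (3:ℤ) := Int.prime_three
  -- coprimality with 2
  have c2ab : IsCoprime ((a:ℤ)+b) 2 :=
    ((p2.coprime_iff_not_dvd).mpr (by omega)).symm
  have c2b3a : IsCoprime (b-3*a) (2:ℤ) :=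
    ((p2.coprime_iff_not_dvd).mpr (by omega)).symm
  -- (a+b) coprime a
  have cab_a : IsCoprime (a+b) a := by
    have := (h.symm.add_mul_right_left 1)
    simpa [add_comm] using this
  have cab_2a : IsCoprime (a+b) (2*a) := c2ab.mul_right cab_a
  -- P1 Q1 : (a+b) coprime (3a+b)
  have hP1Q1 : IsCoprime (a+b) (3*a+b) := by
    have := cab_2a.add_mul_left_right 1
    have h' : 2*a + (a+b)*1 = 3*a+b := by ring
    rwa [h'] at this
  -- P1 Q2 : (a+b) coprime (b-a)
  have hP1Q2 : IsCoprime (a+b) (b-a) := by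
    have := (cab_2a.add_mul_left_right (-1)).neg_right
    have h' : -(2*a + (a+b)*(-1)) = b-a := by ring
    rwa [h'] at this
  -- (b-3a) coprime b
  have cb3a_b : IsCoprime (b-3*a) b := by
    have cb3 : IsCoprime b (3:ℤ) := ((p3.coprime_iff_not_dvd).mpr h3b).symm
    have cb3a : IsCoprime b (3*a) := cb3.mul_right h.symm
    have := cb3a.neg_right.add_mul_left_right 1
    have h' : -(3*a) + b*1 = b-3*a := by ring
    rw [h'] at this
    exact this.symm
  have cb3a_2b : IsCoprime (b-3*a) (2*b) := c2b3a.mul_right cb3a_b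
  -- P2 Q1 : (b-3a) coprime (3a+b)
  have hP2Q1 : IsCoprime (b-3*a) (3*a+b) := by
    have := cb3a_2b.add_mul_left_right (-1)
    have h' : 2*b + (b-3*a)*(-1) = 3*a+b := by ring
    rwa [h'] at this
  -- (b-3a) coprime a
  have cb3a_a : IsCoprime (b-3*a) a := by
    have := h.add_mul_left_right (-3)
    have h' : b + a*(-3) = b-3*a := by ring
    rw [h'] at this
    exact this.symm
  have cb3a_2a : IsCoprime (b-3*a) (2*a) := c2b3a.mul_right cb3a_a
  -- P2 Q2 : (b-3a) coprime (b-a)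
  have hP2Q2 : IsCoprime (b-3*a) (b-a) := by
    have := cb3a_2a.add_mul_left_right 1
    have h' : 2*a + (b-3*a)*1 = b-a := by ring
    rwa [h'] at this
  have hA : IsCoprime ((a+b)^3*(b-3*a)) (3*a+b) :=
    (hP1Q1.pow_left).mul_left hP2Q1
  have hB : IsCoprime ((a+b)^3*(b-3*a)) ((b-a)^3) :=
    ((hP1Q2.pow_left).mul_left hP2Q2).pow_right
  exact hA.mul_right hB
end

section
/- If a and b are coprime integers with a even, then gcd((a⁴−6a²b²+b⁴)(a²+b²)², (a²−b²)⁴) = 1. -/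
/-!
Put `c = a² - b²`. Modulo `c` we have `a⁴ - 6a²b² + b⁴ = c² - (2ab)² ≡ -(2ab)²` and
`a² + b² ≡ 2b²`, so it suffices that `2`, `a` and `b` are coprime to `c`. For `a` and `b` this
follows from `IsCoprime a b`; for `2` it is the oddness of `c`, which is where `a` even (hence
`b` odd) enters.
-/

namespace IsCoprime

variable {R : Type*} [CommRing R] {a b : R}

theorem isCoprime_sq_sub_sq_left (h : IsCoprime a b) : IsCoprime a (a ^ 2 - b ^ 2) := by
  rw [show a ^ 2 - b ^ 2 = -b ^ 2 + a * a by ring, add_mul_left_right_iff]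
  exact h.pow_right.neg_right

theorem isCoprime_sq_sub_sq_right (h : IsCoprime a b) : IsCoprime b (a ^ 2 - b ^ 2) := by
  rw [show a ^ 2 - b ^ 2 = a ^ 2 + b * -b by ring, add_mul_left_right_iff]
  exact h.symm.pow_right

theorem sq_add_sq_sq_sub_sq (h : IsCoprime a b) (h2 : IsCoprime 2 (a ^ 2 - b ^ 2)) :
    IsCoprime (a ^ 2 + b ^ 2) (a ^ 2 - b ^ 2) := by
  rw [show a ^ 2 + b ^ 2 = 2 * b ^ 2 + 1 * (a ^ 2 - b ^ 2) by ring, add_mul_right_left_iff]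
  exact h2.mul_left h.isCoprime_sq_sub_sq_right.pow_left

theorem quartic_sq_sub_sq (h : IsCoprime a b) (h2 : IsCoprime 2 (a ^ 2 - b ^ 2)) :
    IsCoprime (a ^ 4 - 6 * a ^ 2 * b ^ 2 + b ^ 4) (a ^ 2 - b ^ 2) := by
  rw [show a ^ 4 - 6 * a ^ 2 * b ^ 2 + b ^ 4 = -(2 * a * b) ^ 2 + (a ^ 2 - b ^ 2) * (a ^ 2 - b ^ 2)
    by ring, add_mul_right_left_iff, neg_left_iff]
  exact ((h2.mul_left h.isCoprime_sq_sub_sq_left).mul_left h.isCoprime_sq_sub_sq_right).pow_left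

theorem quartic_mul_sq_add_sq_sq_sub_sq_pow (h : IsCoprime a b)
    (h2 : IsCoprime 2 (a ^ 2 - b ^ 2)) {m n : ℕ} :
    IsCoprime ((a ^ 4 - 6 * a ^ 2 * b ^ 2 + b ^ 4) * (a ^ 2 + b ^ 2) ^ m) ((a ^ 2 - b ^ 2) ^ n) :=
  ((h.quartic_sq_sub_sq h2).mul_left (h.sq_add_sq_sq_sub_sq h2).pow_left).pow_right

end IsCoprime

theorem Int.odd_of_isCoprime_of_even {a b : ℤ} (h : IsCoprime a b) (ha : Even a) : Odd b :=
  Int.isCoprime_two_right.mp (h.symm.of_isCoprime_of_dvd_right ha.two_dvd)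

theorem stmt_7 (a b : ℤ) (h : IsCoprime a b) (ha : Even a) :
    IsCoprime ((a^4-6*a^2*b^2+b^4)*(a^2+b^2)^2) ((a^2-b^2)^4) := by
  have hb : Odd b := Int.odd_of_isCoprime_of_even h ha
  have h2 : IsCoprime 2 (a ^ 2 - b ^ 2) :=
    Int.isCoprime_two_left.mpr (((Int.even_pow' two_ne_zero).mpr ha).sub_odd hb.pow)
  exact h.quartic_mul_sq_add_sq_sq_sub_sq_pow h2
end

section
/- Define rad(n) as the product of distinct primes dividing n, and call a triple (a,b,c) of coprime positive integers with a+b=c a good ABC triple if rad(abc) < c. If (a,b,a+b) is a good ABC triple with a even and b > a, then ((2ab)², (a²−b²)², (a²+b²)²) is also a good ABC triple. -/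
def rad (n : ℕ) : ℕ := ∏ p ∈ n.primeFactors, p

def GoodABC (a b c : ℕ) : Prop :=
  0 < a ∧ 0 < b ∧ Nat.gcd a b = 1 ∧ a + b = c ∧ rad (a*b*c) < c

lemma rad_dvd (n : ℕ) : rad n ∣ n := Nat.prod_primeFactors_dvd n

lemma rad_pos (n : ℕ) : 0 < rad n :=
  Finset.prod_pos fun p hp => (Nat.prime_of_mem_primeFactors hp).pos

lemma rad_mul_dvd (m n : ℕ) (hm : m ≠ 0) (hn : n ≠ 0) :
    rad (m*n) ∣ rad m * rad n := by
  unfold rad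
  rw [Nat.primeFactors_mul hm hn, Finset.union_comm,
      ← Finset.sdiff_union_self_eq_union, Finset.prod_union Finset.sdiff_disjoint,
      mul_comm (∏ p ∈ m.primeFactors, p)]
  exact mul_dvd_mul (Finset.prod_dvd_prod_of_subset _ _ _ Finset.sdiff_subset) dvd_rfl

theorem stmt_15 (a b : ℕ) (h : GoodABC a b (a+b)) (ha : Even a) (hab : a < b) :
    GoodABC ((2*a*b)^2) ((b^2-a^2)^2) ((a^2+b^2)^2) := by
  obtain ⟨ha0, hb0, hcop, -, hrad⟩ := h
  have hba : a ≤ b := hab.le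
  have hb2 : a^2 ≤ b^2 := Nat.pow_le_pow_left hba 2
  have hb2' : a^2 < b^2 := Nat.pow_lt_pow_left hab (by norm_num)
  have h2a : 2 ∣ a := ha.two_dvd
  have hbodd : ¬ 2 ∣ b := by
    intro h2b
    have := Nat.dvd_gcd h2a h2b
    omega
  have hfact : b^2 - a^2 = (b - a) * (a + b) := by
    zify [hb2, hba]; ring
  have hcop2 : Nat.Coprime (2*a*b) (b^2-a^2) := by
    have h2a2 : 2 ∣ a^2 := dvd_pow h2a (by norm_num)
    have hb2odd : ¬ 2 ∣ b^2 := fun hd => hbodd (Nat.Prime.dvd_of_dvd_pow Nat.prime_two hd)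
    by_contra hg
    obtain ⟨p, hp, hpd⟩ := Nat.exists_prime_and_dvd hg
    have hp1 : p ∣ 2*a*b := hpd.trans (Nat.gcd_dvd_left _ _)
    have hp2 : p ∣ b^2 - a^2 := hpd.trans (Nat.gcd_dvd_right _ _)
    rcases (Nat.Prime.dvd_mul hp).1 hp1 with h1 | hpb
    · rcases (Nat.Prime.dvd_mul hp).1 h1 with h2 | hpa
      · have : p = 2 := (Nat.prime_dvd_prime_iff_eq hp Nat.prime_two).1 h2
        subst this
        omega
      · have hpa2 : p ∣ a^2 := dvd_pow hpa (by norm_num)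
        have : p ∣ (b^2 - a^2) + a^2 := dvd_add hp2 hpa2
        rw [Nat.sub_add_cancel hb2] at this
        have hpb : p ∣ b := Nat.Prime.dvd_of_dvd_pow hp this
        have := Nat.dvd_gcd hpa hpb
        rw [hcop] at this
        exact Nat.Prime.one_lt hp |>.ne' (Nat.dvd_one.1 this)
    · have hpb2 : p ∣ b^2 := dvd_pow hpb (by norm_num)
      have : p ∣ b^2 - (b^2 - a^2) := Nat.dvd_sub hpb2 hp2
      rw [Nat.sub_sub_self hb2] at this
      have hpa : p ∣ a := Nat.Prime.dvd_of_dvd_pow hp this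
      have := Nat.dvd_gcd hpa hpb
      rw [hcop] at this
      exact Nat.Prime.one_lt hp |>.ne' (Nat.dvd_one.1 this)
  have hsubpos : 0 < b^2 - a^2 := by omega
  refine ⟨by positivity, by positivity, Nat.Coprime.pow 2 2 hcop2, ?_, ?_⟩
  · zify [hb2]; ring
  · -- radical inequality
    set x := a*b*(a+b) with hx
    set y := (b-a)*(a^2+b^2) with hy
    have hx0 : x ≠ 0 := by positivity
    have hy0 : y ≠ 0 := by
      have : 0 < b - a := by omega
      positivity
    set Q := x * y with hQ
    have hQ0 : Q ≠ 0 := mul_ne_zero hx0 hy0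
    set P := (2*a*b)^2*((b^2-a^2)^2)*((a^2+b^2)^2) with hP
    have hPQ : P = 4 * Q^2 := by
      rw [hP, hQ, hx, hy, hfact]; ring
    have hQP : Q ∣ P := by
      rw [hPQ]; exact Dvd.dvd.mul_left (dvd_pow_self Q (by norm_num)) 4
    have hPQ4 : P ∣ Q^4 := by
      have h4 : 4 ∣ Q^2 := by
        have : a^2 ∣ Q^2 := by
          rw [hQ, hx]
          exact pow_dvd_pow_of_dvd (Dvd.dvd.mul_right (Dvd.dvd.mul_right (dvd_mul_right a b) _) _) 2
        have h4a : 4 ∣ a^2 := by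
          obtain ⟨k, rfl⟩ := h2a; exact ⟨k^2, by ring⟩
        exact h4a.trans this
      rw [hPQ, show Q^4 = Q^2 * Q^2 by ring]
      exact mul_dvd_mul h4 dvd_rfl
    have hP0 : P ≠ 0 := by
      have : 0 < b^2 - a^2 := by omega
      positivity
    have hpf : P.primeFactors = Q.primeFactors := by
      apply Finset.Subset.antisymm
      · have := Nat.primeFactors_mono hPQ4 (pow_ne_zero 4 hQ0)
        rwa [Nat.primeFactors_pow Q (by norm_num)] at this
      · exact Nat.primeFactors_mono hQP hP0
    have hradPQ : rad P = rad Q := by unfold rad; rw [hpf]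
    have hradQ : rad Q ∣ rad x * rad y := rad_mul_dvd x y hx0 hy0
    have hle : rad Q ≤ rad x * y :=
      (Nat.le_of_dvd (Nat.mul_pos (rad_pos x) (rad_pos y)) hradQ).trans
        (Nat.mul_le_mul_left _ (Nat.le_of_dvd (Nat.pos_of_ne_zero hy0) (rad_dvd y)))
    have hlt : rad Q < (a+b) * y := by
      calc rad Q ≤ rad x * y := hle
        _ < (a+b) * y := by
            apply Nat.mul_lt_mul_of_lt_of_le hrad le_rfl (Nat.pos_of_ne_zero hy0)
    have hfin : (a+b) * y < (a^2+b^2)^2 := by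
      have h1 : (a+b)*y = (b^2-a^2)*(a^2+b^2) := by rw [hy, hfact]; ring
      rw [h1]
      have h2 : b^2 - a^2 < a^2 + b^2 :=
        lt_of_le_of_lt (Nat.sub_le _ _) (Nat.lt_add_of_pos_left (pow_pos ha0 2))
      calc (b^2-a^2)*(a^2+b^2) < (a^2+b^2)*(a^2+b^2) :=
            Nat.mul_lt_mul_of_lt_of_le h2 le_rfl (by positivity)
        _ = (a^2+b^2)^2 := (pow_two _).symm
    calc rad P = rad Q := hradPQ
      _ < _ := hlt.trans hfin
end

section
/- If a and b are coprime positive integers with a even and b odd, then 8ab(a²+b²) is not a perfect square. -/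
/-!
Since `8ab(a² + b²) = (a + b)⁴ - (a - b)⁴` and `a ± b` are coprime, a square value would give a
solution of `x⁴ - y⁴ = z²` in coprime positive integers, and Fermat's descent excludes these.
Write `x² = y² + 2d` (for odd `y`) resp. `x² = z + 2d` (for even `y`) and split the coprime
factors `d` and `y² + d` resp. `d` and `z + d` into powers. For odd `y` this gives directly a
solution `m⁴ - n⁴ = (xy)²` with `m < x`; for even `y` it gives `x² = u⁴ + 4v⁴`, and the same
splitting of `x² - u⁴ = 4v⁴` gives a solution `s⁴ - r⁴ = u²` with `s < x`.
-/

namespace Nat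

theorem Coprime.exists_pow_of_mul_eq_pow {a b c k : ℕ} (h : a.Coprime b) (habc : a * b = c ^ k) :
    (∃ d, a = d ^ k) ∧ ∃ e, b = e ^ k :=
  ⟨exists_eq_pow_of_mul_eq_pow (by simpa [Nat.isUnit_iff, gcd_eq_nat_gcd] using h) habc,
    exists_eq_pow_of_mul_eq_pow (by simpa [Nat.isUnit_iff, gcd_eq_nat_gcd] using h.symm)
      (by rwa [mul_comm])⟩

theorem Coprime.of_pow {a b m n : ℕ} (hm : m ≠ 0) (hn : n ≠ 0) (h : (a ^ m).Coprime (b ^ n)) :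
    a.Coprime b :=
  (coprime_pow_left_iff (pos_of_ne_zero hm) _ _).mp
    ((coprime_pow_right_iff (pos_of_ne_zero hn) _ _).mp h)

theorem coprime_add_of_mul_add_dvd {s d n : ℕ} (hs : s.Coprime n) (h : d * (s + d) ∣ n) :
    d.Coprime (s + d) :=
  coprime_add_self_right.mpr (hs.coprime_dvd_right (dvd_of_mul_right_dvd h)).symm

theorem exists_eq_add_two_mul_of_odd {x y : ℕ} (hx : Odd x) (hy : Odd y) (h : y ≤ x) :
    ∃ d, x = y + 2 * d := by
  obtain ⟨i, rfl⟩ := hx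
  obtain ⟨j, rfl⟩ := hy
  exact ⟨i - j, by omega⟩

theorem Coprime.exists_of_mul_eq_four_mul_pow_four {p q w : ℕ} (hpq : p.Coprime q) (hp : Odd p)
    (hw : 0 < w) (h : p * q = 4 * w ^ 4) :
    ∃ u v, u.Coprime v ∧ Odd u ∧ 0 < v ∧ p = u ^ 4 ∧ q = 4 * v ^ 4 := by
  have h4p : Coprime 4 p := by simpa using (coprime_two_left.mpr hp).pow_left 2
  obtain ⟨q, rfl⟩ : 4 ∣ q := h4p.dvd_of_dvd_mul_left ⟨_, h⟩
  have h' : p * q = w ^ 4 := by linarith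
  obtain ⟨⟨u, rfl⟩, ⟨v, rfl⟩⟩ := hpq.coprime_mul_left_right.exists_pow_of_mul_eq_pow h'
  refine ⟨u, v, hpq.coprime_mul_left_right.of_pow four_ne_zero four_ne_zero,
    (odd_pow_iff four_ne_zero).mp hp, ?_, rfl, rfl⟩
  exact pos_of_ne_zero (by rintro rfl; simpa [hw.ne'] using h'.symm)

end Nat

open Nat

def QuarticDiffSq (x y z : ℕ) : Prop :=
  x.Coprime y ∧ 0 < y ∧ 0 < z ∧ x ^ 4 = y ^ 4 + z ^ 2

namespace QuarticDiffSq

variable {x y z : ℕ}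

theorem coprime_right (h : QuarticDiffSq x y z) : y.Coprime z := by
  obtain ⟨hxy, -, -, heq⟩ := h
  have : (y ^ 4).Coprime (z ^ 2 + y ^ 4) := by
    rw [add_comm, ← heq]
    exact (hxy.pow 4 4).symm
  exact (coprime_add_self_right.mp this).of_pow four_ne_zero two_ne_zero

theorem odd_left (h : QuarticDiffSq x y z) (hy : Odd y) : Odd x := by
  obtain ⟨-, -, -, heq⟩ := h
  by_contra hx
  obtain ⟨k, rfl⟩ := not_odd_iff_even.mp hx
  obtain ⟨i, hi⟩ : Odd (y ^ 2) := hy.pow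
  rw [show y ^ 4 = (y ^ 2) ^ 2 by ring, hi] at heq
  -- modulo 4 the right-hand side is 1 or 2, the left-hand side 0
  rcases even_or_odd z with ⟨j, rfl⟩ | ⟨j, rfl⟩ <;> ring_nf at heq <;> omega

theorem exists_sq_eq_of_even (h : QuarticDiffSq x y z) (hy : Even y) :
    ∃ u v, u.Coprime v ∧ Odd u ∧ 0 < v ∧ x ^ 2 = u ^ 4 + 4 * v ^ 4 := by
  have hyz := h.coprime_right
  obtain ⟨hxy, hy0, hz0, heq⟩ := h
  have hx : Odd x := coprime_two_right.mp (hxy.coprime_dvd_right (even_iff_two_dvd.mp hy))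
  have hz : Odd z := by
    have hx4 : Odd (x ^ 4) := hx.pow
    rw [heq] at hx4
    exact (odd_pow_iff two_ne_zero).mp ((odd_add'.mp hx4).mpr (hy.pow_of_ne_zero four_ne_zero))
  have hle : z ≤ x ^ 2 :=
    (Nat.pow_le_pow_iff_left two_ne_zero).mp (by rw [← pow_mul, heq]; omega)
  obtain ⟨d, hd⟩ := exists_eq_add_two_mul_of_odd hx.pow hz hle
  obtain ⟨w, rfl⟩ := hy
  have hdw : d * (z + d) = 4 * w ^ 4 := by
    have : (z + 2 * d) ^ 2 = (w + w) ^ 4 + z ^ 2 := by rw [← hd, ← heq]; ring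
    linarith
  have hcop : d.Coprime (z + d) :=
    coprime_add_of_mul_add_dvd (hyz.symm.pow_right 4) (Dvd.intro 4 (by rw [hdw]; ring))
  have hw : 0 < w := by omega
  rw [hd]
  rcases Nat.even_or_odd d with hd2 | hd2
  · obtain ⟨u, v, huv, hu, hv, hu4, hv4⟩ :=
      hcop.symm.exists_of_mul_eq_four_mul_pow_four (hz.add_even hd2) hw (by rw [mul_comm, hdw])
    exact ⟨u, v, huv, hu, hv, by omega⟩
  · obtain ⟨u, v, huv, hu, hv, hu4, hv4⟩ :=
      hcop.exists_of_mul_eq_four_mul_pow_four hd2 hw hdw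
    exact ⟨u, v, huv, hu, hv, by omega⟩

theorem exists_lt_of_odd (h : QuarticDiffSq x y z) (hy : Odd y) :
    ∃ x' y' z', QuarticDiffSq x' y' z' ∧ x' < x := by
  have hx := h.odd_left hy
  have hyz := h.coprime_right
  obtain ⟨-, hy0, hz0, heq⟩ := h
  have hle : y ^ 2 ≤ x ^ 2 := (Nat.pow_le_pow_iff_left two_ne_zero).mpr
    ((Nat.pow_le_pow_iff_left four_ne_zero).mp (by omega))
  obtain ⟨d, hd⟩ := exists_eq_add_two_mul_of_odd hx.pow hy.pow hle
  have hz : z ^ 2 = 4 * (d * (y ^ 2 + d)) := by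
    have : x ^ 4 = (x ^ 2) ^ 2 := by ring
    rw [this, hd] at heq
    linarith
  obtain ⟨w, rfl⟩ : Even z :=
    (Nat.even_pow' two_ne_zero).mp ⟨2 * (d * (y ^ 2 + d)), by rw [hz]; ring⟩
  have hcop : d.Coprime (y ^ 2 + d) :=
    coprime_add_of_mul_add_dvd (hyz.pow 2 2) (Dvd.intro_left _ hz.symm)
  have hdw : d * (y ^ 2 + d) = w ^ 2 := by linarith
  obtain ⟨⟨n, rfl⟩, ⟨m, hm⟩⟩ := hcop.exists_pow_of_mul_eq_pow hdw
  have hn : 0 < n := pos_of_ne_zero (by rintro rfl; simpa [show w ≠ 0 by omega] using hdw.symm)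
  refine ⟨m, n, x * y, ⟨(hm ▸ hcop).symm.of_pow two_ne_zero two_ne_zero, hn,
    Nat.mul_pos hx.pos hy0, ?_⟩, ?_⟩
  · have : m ^ 4 = (m ^ 2) ^ 2 := by ring
    rw [this, ← hm, mul_pow, hd]; ring
  · have := pow_pos hn 2
    exact (Nat.pow_lt_pow_iff_left two_ne_zero).mp (by omega)

end QuarticDiffSq

theorem exists_quarticDiffSq_lt_of_sq_eq {t u v : ℕ} (huv : u.Coprime v) (hu : Odd u) (hv : 0 < v)
    (h : t ^ 2 = u ^ 4 + 4 * v ^ 4) : ∃ x y z, QuarticDiffSq x y z ∧ x < t := by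
  have ht : Odd t :=
    (odd_pow_iff two_ne_zero).mp (h ▸ hu.pow.add_even ⟨2 * v ^ 4, by ring⟩)
  have hle : u ^ 2 ≤ t := by
    refine (Nat.pow_le_pow_iff_left two_ne_zero).mp ?_
    rw [h]; ring_nf; omega
  obtain ⟨d, rfl⟩ := exists_eq_add_two_mul_of_odd ht hu.pow hle
  have hd : d * (u ^ 2 + d) = v ^ 4 := by linarith
  have hcop : d.Coprime (u ^ 2 + d) := coprime_add_of_mul_add_dvd (huv.pow 2 4) (hd ▸ dvd_rfl)
  obtain ⟨⟨r, rfl⟩, ⟨s, hs⟩⟩ := hcop.exists_pow_of_mul_eq_pow hd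
  have hr : 0 < r := pos_of_ne_zero (by rintro rfl; simpa [hv.ne'] using hd.symm)
  refine ⟨s, r, u,
    ⟨(hs ▸ hcop).symm.of_pow four_ne_zero four_ne_zero, hr, hu.pos, ?_⟩, ?_⟩
  · rw [← hs]; ring
  · have := Nat.le_self_pow four_ne_zero s
    have := pow_pos hr 4
    omega

theorem not_quarticDiffSq (x y z : ℕ) : ¬ QuarticDiffSq x y z := by
  induction x using Nat.strong_induction_on generalizing y z with
  | _ x ih =>
  intro h
  obtain ⟨x', y', z', h', hlt⟩ : ∃ x' y' z', QuarticDiffSq x' y' z' ∧ x' < x := by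
    rcases Nat.even_or_odd y with hy | hy
    · obtain ⟨u, v, huv, hu, hv, hx⟩ := h.exists_sq_eq_of_even hy
      exact exists_quarticDiffSq_lt_of_sq_eq huv hu hv hx
    · exact h.exists_lt_of_odd hy
  exact ih x' hlt y' z' h'

theorem not_isSquare_eight_mul_mul_mul_sq_add_sq_of_lt {a b : ℕ} (hab : a.Coprime b) (hb : 0 < b)
    (hlt : b < a) (hodd : Odd (a + b)) : ¬ IsSquare (8 * a * b * (a ^ 2 + b ^ 2)) := by
  rintro ⟨r, hr⟩
  obtain ⟨c, rfl⟩ := Nat.exists_eq_add_of_le hlt.le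
  have hc : Odd c := by
    rw [show b + c + b = c + 2 * b by ring] at hodd
    exact (Nat.odd_add.mp hodd).mpr (even_two_mul b)
  have hcop : (b + c + b).Coprime c := by
    rw [show b + c + b = 2 * b + c by ring, coprime_add_self_left]
    exact (coprime_two_left.mpr hc).mul_left (coprime_self_add_left.mp hab).symm
  have hr0 : 0 < r := pos_of_mul_pos_left (hr ▸ by positivity) (Nat.zero_le r)
  -- `(a + b)⁴ = (a - b)⁴ + 8ab(a² + b²)` with `a = b + c`
  refine not_quarticDiffSq (b + c + b) c r ⟨hcop, by omega, hr0, ?_⟩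
  rw [sq, ← hr]
  ring

theorem stmt_16 (a b : ℕ) (h : Nat.Coprime a b) (ha0 : 0 < a) (hb0 : 0 < b)
    (ha : Even a) (hb : Odd b) : ¬ IsSquare (8*a*b*(a^2+b^2)) := by
  have hne : a ≠ b := by
    rintro rfl
    exact (not_even_iff_odd.mpr hb) ha
  rcases hne.lt_or_gt with hlt | hlt
  · rw [show 8*a*b*(a^2+b^2) = 8*b*a*(b^2+a^2) by ring]
    exact not_isSquare_eight_mul_mul_mul_sq_add_sq_of_lt h.symm ha0 hlt (hb.add_even ha)
  · exact not_isSquare_eight_mul_mul_mul_sq_add_sq_of_lt h hb0 hlt (ha.add_odd hb)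
end
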